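/- Let p and q be distinct odd primes and n = pq. Then the graph ICG_n({1, p}) has diameter 2, two vertices a, b are at distance 2 if and only if gcd(a − b, n) = q, and the spectrum of its distance matrix consists of the eigenvalue −2 with multiplicity pq − q, the eigenvalue p − 2 with multiplicity q − 1, and the eigenvalue pq + p − 2 with multiplicity 1. -/

import Mathlib

/-!
Two vertices of `ICG_{pq}({1, p})` are adjacent exactly when they differ mod `q`, since the
gcd of their difference with `pq` is `1` or `p` precisely then. So the graph is the complete
`q`-partite graph whose parts are the residue classes mod `q`, each of size `p`: distances are
`1` across parts and `2` inside a part, and the distance matrix is `U (J + I) Uᵀ - 2I` for the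
`pq × q` class-indicator matrix `U`. Since `UᵀU = pI`, moving `U` to the other side
(`χ(AB) = X^(pq-q) χ(BA)`) reduces the characteristic polynomial to that of the `q × q` matrix
`p (J + I)`, a rank-one perturbation of a scalar matrix.
-/

open scoped Classical

/-- The integral circulant graph `ICG_n(D)`: vertices `0,…,n-1` (as `ZMod n`), with `a ~ b` iff
`gcd(a-b, n) ∈ D`. -/
def ICG (n : ℕ) (D : Finset ℕ) : SimpleGraph (ZMod n) where
  Adj a b := a ≠ b ∧ Int.gcd ((a.val : ℤ) - (b.val : ℤ)) n ∈ D
  symm := ⟨by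
    rintro a b ⟨hne, h⟩
    refine ⟨hne.symm, ?_⟩
    rwa [show ((b.val : ℤ) - a.val) = -((a.val : ℤ) - b.val) by ring, Int.neg_gcd]⟩
  loopless := ⟨by rintro a ⟨h, -⟩; exact h rfl⟩

/-- The distance matrix of a graph. -/
noncomputable def distMatrix {V : Type} [Fintype V] (G : SimpleGraph V) : Matrix V V ℝ :=
  Matrix.of fun i j => (G.dist i j : ℝ)

/-- The distance energy: the sum of the absolute values of the eigenvalues (with multiplicity)
of the distance matrix, i.e. of the roots of its characteristic polynomial. -/
noncomputable def distEnergy {V : Type} [Fintype V] [DecidableEq V] (G : SimpleGraph V) : ℝ :=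
  ((distMatrix G).charpoly.roots.map fun x => |x|).sum

open Polynomial Function Matrix

theorem Nat.eq_one_or_self_or_self_or_mul_of_dvd_mul {p q g : ℕ} (hp : p.Prime) (hq : q.Prime)
    (h : g ∣ p * q) : g = 1 ∨ g = p ∨ g = q ∨ g = p * q := by
  obtain ⟨g₁, g₂, h₁, h₂, rfl⟩ := Nat.dvd_mul.mp h
  rcases (Nat.dvd_prime hp).mp h₁ with rfl | rfl <;>
    rcases (Nat.dvd_prime hq).mp h₂ with rfl | rfl <;> simp

namespace ZMod

theorem card_filter_castHom_mul_eq {p q : ℕ} [NeZero p] [NeZero q] (hpq : p.Coprime q)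
    (j : ZMod q) :
    (Finset.univ.filter fun a : ZMod (p * q) => castHom (dvd_mul_left q p) (ZMod q) a = j).card
      = p := by
  rw [Finset.card_equiv (chineseRemainder hpq).toEquiv (t := Finset.univ.filter (·.2 = j))]
  · rw [show Finset.univ.filter (fun x : ZMod p × ZMod q => x.2 = j) = Finset.univ ×ˢ {j} by
      ext ⟨x, y⟩; simp [eq_comm]]
    simp
  · intro a
    simp only [Finset.mem_filter, Finset.mem_univ, true_and]
    simp [chineseRemainder]

variable {n : ℕ} [NeZero n]

theorem intCast_dvd_val_sub_val_iff {d : ℕ} (hd : d ∣ n) (a b : ZMod n) :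
    (d : ℤ) ∣ (a.val : ℤ) - b.val ↔ castHom hd (ZMod d) a = castHom hd (ZMod d) b := by
  rw [castHom_apply, castHom_apply, cast_eq_val, cast_eq_val,
    ← Int.cast_natCast (R := ZMod d) a.val, ← Int.cast_natCast (R := ZMod d) b.val,
    intCast_eq_intCast_iff_dvd_sub, dvd_sub_comm]

theorem gcd_val_sub_val_eq_self_iff (a b : ZMod n) :
    Int.gcd ((a.val : ℤ) - b.val) n = n ↔ a = b := by
  rw [← Int.natCast_inj, Int.gcd_eq_right_iff_dvd (Int.natCast_nonneg n),
    intCast_dvd_val_sub_val_iff dvd_rfl, castHom_self, RingHom.id_apply, RingHom.id_apply]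

theorem dvd_gcd_val_sub_val_iff {d : ℕ} (hd : d ∣ n) (a b : ZMod n) :
    d ∣ Int.gcd ((a.val : ℤ) - b.val) n ↔ castHom hd (ZMod d) a = castHom hd (ZMod d) b := by
  rw [← intCast_dvd_val_sub_val_iff hd, Int.gcd_eq_natAbs_gcd_natAbs, Nat.dvd_gcd_iff,
    Int.natAbs_natCast, Int.natCast_dvd]
  exact and_iff_left hd

end ZMod

namespace Matrix

variable {m n R : Type*} [Fintype m] [Fintype n] [DecidableEq m] [DecidableEq n] [CommRing R]

theorem charpoly_add_scalar (M : Matrix n n R) (μ : R) :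
    (M + scalar n μ).charpoly = M.charpoly.comp (X - C μ) := by
  simpa [sub_eq_add_neg] using charpoly_sub_scalar M (-μ)

theorem charpoly_submatrix_of_card_fiber (f : m → n) {c : ℕ}
    (hf : ∀ j, (Finset.univ.filter fun i => f i = j).card = c)
    (hle : Fintype.card n ≤ Fintype.card m) (M : Matrix n n R) :
    (M.submatrix f f).charpoly =
      X ^ (Fintype.card m - Fintype.card n) * ((c : R) • M).charpoly := by
  set U : Matrix m n R := of fun i j => if f i = j then 1 else 0
  have hUMU : M.submatrix f f = U * (M * Uᵀ) := by
    ext i j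
    simp [U, mul_apply]
  have hUU : Uᵀ * U = (c : R) • 1 := by
    ext j k
    simp only [U, mul_apply, transpose_apply, of_apply, mul_boole, ← ite_and, Finset.sum_boole]
    rcases eq_or_ne j k with rfl | hjk
    · simp [hf]
    · rw [Finset.filter_false_of_mem fun i _ ⟨hk, hj⟩ => hjk (hj.symm.trans hk)]
      simp [hjk]
  rw [hUMU, charpoly_mul_comm_of_le _ _ hle, Matrix.mul_assoc, hUU, Matrix.mul_smul,
    Matrix.mul_one]

theorem charpoly_smul_vecMulVec_one_add_one [Nonempty n] (c : R) :
    (c • (vecMulVec 1 1 + 1 : Matrix n n R)).charpoly =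
      (X - C c) ^ (Fintype.card n - 1) * (X - C (c + c * Fintype.card n)) := by
  have hdot : (c • 1 : n → R) ⬝ᵥ 1 = c * Fintype.card n := by
    simp [dotProduct, mul_comm]
  rw [smul_add, smul_one_eq_diagonal, ← scalar_apply, charpoly_add_scalar,
    ← smul_vecMulVec, charpoly_vecMulVec, hdot]
  obtain ⟨k, hk⟩ := Nat.exists_eq_add_one.mpr (Fintype.card_pos (α := n))
  simp only [hk, Nat.add_sub_cancel, sub_comp, pow_comp, X_comp, smul_eq_C_mul, mul_comp, C_comp,
    add_comp, natCast_comp, one_comp, map_add, map_mul, map_natCast, map_one, Nat.cast_add,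
    Nat.cast_one]
  ring

end Matrix

namespace SimpleGraph

variable {V W : Type*} [Nontrivial W] {f : V → W}

theorem edist_comap_top [DecidableEq V] [DecidableEq W] (hf : Surjective f) (u v : V) :
    ((⊤ : SimpleGraph W).comap f).edist u v = if u = v then 0 else if f u = f v then 2 else 1 := by
  split_ifs with huv hfuv
  · rw [huv, edist_self]
  · obtain ⟨w, hw⟩ := exists_ne (f u)
    obtain ⟨c, rfl⟩ := hf w
    rw [edist_eq_two_iff]
    refine ⟨huv, by simp [hfuv], c, ?_⟩
    rw [mem_commonNeighbors, comap_adj, comap_adj, top_adj, top_adj]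
    exact ⟨hw.symm, hfuv ▸ hw.symm⟩
  · exact edist_eq_one_iff_adj.mpr (by simpa)

theorem dist_comap_top [DecidableEq V] [DecidableEq W] (hf : Surjective f) (u v : V) :
    ((⊤ : SimpleGraph W).comap f).dist u v = if u = v then 0 else if f u = f v then 2 else 1 := by
  rw [dist, edist_comap_top hf]
  split_ifs <;> rfl

theorem diam_comap_top (hf : Surjective f) (hinj : ¬ Injective f) :
    ((⊤ : SimpleGraph W).comap f).diam = 2 := by
  obtain ⟨u, v, hfuv, huv⟩ : ∃ u v, f u = f v ∧ u ≠ v := by simpa [Injective] using hinj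
  have hediam : ((⊤ : SimpleGraph W).comap f).ediam = 2 := by
    refine le_antisymm (ediam_le_iff.mpr fun u v => ?_) ?_
    · rw [edist_comap_top hf]
      split_ifs <;> norm_num
    · simpa [edist_comap_top hf, huv, hfuv] using
        edist_le_ediam (G := (⊤ : SimpleGraph W).comap f) (u := u) (v := v)
  rw [diam, hediam]
  rfl

end SimpleGraph

theorem distMatrix_comap_top {V W : Type} [Fintype V] [DecidableEq V] [DecidableEq W]
    [Nontrivial W] {f : V → W} (hf : Surjective f) :
    distMatrix ((⊤ : SimpleGraph W).comap f) =
      (vecMulVec 1 1 + 1 : Matrix W W ℝ).submatrix f f - scalar V 2 := by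
  ext u v
  rw [distMatrix, of_apply, SimpleGraph.dist_comap_top hf]
  by_cases huv : u = v
  · simp [huv]
    norm_num
  · by_cases hfuv : f u = f v <;> simp [huv, hfuv, one_apply]
    norm_num

section ICGPrimeMul

variable {p q : ℕ} [NeZero (p * q)] (hp : p.Prime) (hq : q.Prime) (hpq : p ≠ q)

include hp hq hpq

theorem gcd_val_sub_val_mul_trichotomy (a b : ZMod (p * q)) :
    let g := Int.gcd ((a.val : ℤ) - b.val) (p * q : ℕ)
    let π := ZMod.castHom (dvd_mul_left q p) (ZMod q)
    a = b ∧ g = p * q ∨ a ≠ b ∧ π a = π b ∧ g = q ∨ π a ≠ π b ∧ (g = 1 ∨ g = p) := by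
  intro g π
  have hcases : g = 1 ∨ g = p ∨ g = q ∨ g = p * q :=
    Nat.eq_one_or_self_or_self_or_mul_of_dvd_mul hp hq <| by
      simpa only [Int.natAbs_natCast] using
        Int.gcd_dvd_natAbs_right ((a.val : ℤ) - b.val) (p * q : ℕ)
  have hself : g = p * q ↔ a = b := ZMod.gcd_val_sub_val_eq_self_iff a b
  have hdvd : q ∣ g ↔ π a = π b := ZMod.dvd_gcd_val_sub_val_iff _ a b
  have hq1 : ¬ q ∣ 1 := hq.not_dvd_one
  have hqp : ¬ q ∣ p := (Nat.prime_dvd_prime_iff_eq hq hp).not.mpr (Ne.symm hpq)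
  have hqq : q ∣ q := dvd_rfl
  have : q < p * q := lt_mul_left hq.pos hp.one_lt
  rcases hcases with h | h | h | h <;> rw [h] at hself hdvd <;> grind

theorem ICG_mul_eq_comap_top :
    ICG (p * q) {1, p} = (⊤ : SimpleGraph (ZMod q)).comap (ZMod.castHom (dvd_mul_left q p) _) := by
  ext a b
  have := hq.one_lt
  simp only [ICG, SimpleGraph.comap_adj, SimpleGraph.top_adj, Finset.mem_insert,
    Finset.mem_singleton]
  rcases gcd_val_sub_val_mul_trichotomy hp hq hpq a b with h | h | h <;> grind

theorem gcd_val_sub_val_mul_eq_right_iff (a b : ZMod (p * q)) :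
    Int.gcd ((a.val : ℤ) - b.val) (p * q : ℕ) = q ↔
      a ≠ b ∧ ZMod.castHom (dvd_mul_left q p) (ZMod q) a =
        ZMod.castHom (dvd_mul_left q p) (ZMod q) b := by
  have := hq.one_lt
  have : q < p * q := lt_mul_left hq.pos hp.one_lt
  rcases gcd_val_sub_val_mul_trichotomy hp hq hpq a b with h | h | h <;> grind

end ICGPrimeMul

theorem distSpectrum_ICG_pq_one_p_general (p q : ℕ) (hp : p.Prime) (hq : q.Prime)
    (hpq : p ≠ q) (n : ℕ) [NeZero n] (hn : n = p * q) :
    (ICG n {1, p}).diam = 2 ∧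
    (∀ a b : ZMod n, (ICG n {1, p}).dist a b = 2 ↔
      Int.gcd ((a.val : ℤ) - (b.val : ℤ)) n = q) ∧
    (distMatrix (ICG n {1, p})).charpoly =
      (Polynomial.X + Polynomial.C 2) ^ (p * q - q) *
        (Polynomial.X - Polynomial.C ((p : ℝ) - 2)) ^ (q - 1) *
        (Polynomial.X - Polynomial.C ((p : ℝ) * q + p - 2)) := by
  subst hn
  have : Fact (1 < q) := ⟨hq.one_lt⟩
  have : NeZero p := ⟨hp.ne_zero⟩
  set π := ZMod.castHom (dvd_mul_left q p) (ZMod q)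
  have hπ : Surjective π := ZMod.castHom_surjective _
  have hcard : q < p * q := lt_mul_left hq.pos hp.one_lt
  have hπ_inj : ¬ Injective π := fun h =>
    (Fintype.card_le_of_injective π h).not_gt (by simpa [ZMod.card] using hcard)
  rw [ICG_mul_eq_comap_top hp hq hpq]
  refine ⟨SimpleGraph.diam_comap_top hπ hπ_inj, fun a b => ?_, ?_⟩
  · rw [SimpleGraph.dist_comap_top hπ, gcd_val_sub_val_mul_eq_right_iff hp hq hpq]
    split_ifs with hab hπab
    · exact iff_of_false (by norm_num) fun h => h.1 hab
    · exact iff_of_true rfl ⟨hab, hπab⟩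
    · exact iff_of_false (by norm_num) fun h => hπab h.2
  · rw [distMatrix_comap_top hπ, charpoly_sub_scalar,
      charpoly_submatrix_of_card_fiber π (ZMod.card_filter_castHom_mul_eq
        ((Nat.coprime_primes hp hq).mpr hpq)) (by simpa [ZMod.card] using hcard.le),
      charpoly_smul_vecMulVec_one_add_one]
    simp only [ZMod.card, mul_comp, pow_comp, sub_comp, add_comp, X_comp, C_comp, map_sub,
      map_add, map_mul]
    ring

/-- for distinct odd primes `p, q` and `n = pq`, the graph `ICG_n({1, p})` has
diameter `2`, two vertices are at distance `2` iff `gcd(a - b, n) = q`, and the spectrum of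
its distance matrix is `-2` with multiplicity `pq - q`, `p - 2` with multiplicity `q - 1`,
and `pq + p - 2` with multiplicity `1`. -/
theorem distSpectrum_ICG_pq_one_p (p q : ℕ) (hp : p.Prime) (hq : q.Prime) (hpodd : Odd p)
    (hqodd : Odd q) (hpq : p ≠ q) (n : ℕ) [NeZero n] (hn : n = p * q) :
    (ICG n {1, p}).diam = 2 ∧
    (∀ a b : ZMod n, (ICG n {1, p}).dist a b = 2 ↔
      Int.gcd ((a.val : ℤ) - (b.val : ℤ)) n = q) ∧
    (distMatrix (ICG n {1, p})).charpoly =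
      (Polynomial.X + Polynomial.C 2) ^ (p * q - q) *
        (Polynomial.X - Polynomial.C ((p : ℝ) - 2)) ^ (q - 1) *
        (Polynomial.X - Polynomial.C ((p : ℝ) * q + p - 2)) :=
  distSpectrum_ICG_pq_one_p_general p q hp hq hpq n hn
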